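/- arXiv:2303.05229 — 4 statements merged into one kernel-verified Lean document; each statement's English description precedes it below -/
import Mathlib

section
/- Let H be a real Hilbert space, J : H → ℝ Fréchet differentiable and bounded below, with |DJ(u+v)d − DJ(u)d| ≤ L‖v‖‖d‖ for all u, v, d. Let (u⁽ᵐ⁾) be a sequence with corrections d⁽ᵐ⁾ = u⁽ᵐ⁺¹⁾ − u⁽ᵐ⁾ ≠ 0 satisfying (i) the minimality property J(u⁽ᵐ⁺¹⁾) ≤ J(u⁽ᵐ⁾ − α μₘ d⁽ᵐ⁾) for the specific step α = μₘ DJ(u⁽ᵐ⁾)d⁽ᵐ⁾/(L‖d⁽ᵐ⁾‖²), μₘ = sign(DJ(u⁽ᵐ⁾)d⁽ᵐ⁾), and (ii) the angle condition |DJ(u⁽ᵐ⁾)d⁽ᵐ⁾| ≥ ε_θ ‖d⁽ᵐ⁾‖ ‖DJ(u⁽ᵐ⁾)‖ for a fixed 0 < ε_θ < 1. Then ‖DJ(u⁽ᵐ⁾)‖ → 0 as m → ∞. -/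
/-!
The Lipschitz bound on `DJ` gives the descent inequality
`J (u + v) ≤ J u + DJ(u) v + L/2 ‖v‖²`. At the step prescribed in the minimality property this
yields a decrease `J u⁽ᵐ⁾ - J u⁽ᵐ⁺¹⁾ ≥ (DJ(u⁽ᵐ⁾) d⁽ᵐ⁾)² / (2 L ‖d⁽ᵐ⁾‖²)`, which by the angle
condition is at least `ε_θ² / (2 L) · ‖DJ(u⁽ᵐ⁾)‖²`. As `J` is bounded below, these decreases are
summable, so `‖DJ(u⁽ᵐ⁾)‖ → 0`.
-/

open Filter

section Descent

variable {H : Type*} [NormedAddCommGroup H] [NormedSpace ℝ H] {J : H → ℝ} {J' : H → H →L[ℝ] ℝ}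
  {L : ℝ}

theorem apply_add_le_of_lipschitz_fderiv (hJ : ∀ u, HasFDerivAt J (J' u) u)
    (hLip : ∀ u v d : H, |J' (u + v) d - J' u d| ≤ L * ‖v‖ * ‖d‖) (u v : H) :
    J (u + v) ≤ J u + J' u v + L / 2 * ‖v‖ ^ 2 := by
  set φ : ℝ → ℝ := fun t => J (u + t • v) - t * J' u v - L / 2 * t ^ 2 * ‖v‖ ^ 2
  have hφ : ∀ t, HasDerivAt φ (J' (u + t • v) v - J' u v - L * t * ‖v‖ ^ 2) t := by
    intro t
    have hline : HasDerivAt (fun t : ℝ => u + t • v) v t := by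
      simpa using ((hasDerivAt_id t).smul_const v).const_add u
    have hJt : HasDerivAt (fun t : ℝ => J (u + t • v)) (J' (u + t • v) v) t :=
      (hJ _).comp_hasDerivAt t hline
    refine ((hJt.sub ((hasDerivAt_id t).mul_const (J' u v))).sub
      (((hasDerivAt_pow 2 t).const_mul (L / 2)).mul_const (‖v‖ ^ 2))).congr_deriv ?_
    simp only [Nat.cast_ofNat]
    ring
  have hanti : AntitoneOn φ (Set.Ici 0) := by
    refine antitoneOn_of_hasDerivWithinAt_nonpos (convex_Ici 0)
      (fun t _ => (hφ t).continuousAt.continuousWithinAt) (fun t _ => (hφ t).hasDerivWithinAt) ?_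
    intro t ht
    rw [interior_Ici, Set.mem_Ioi] at ht
    have h := (abs_le.mp (hLip u (t • v) v)).2
    rw [norm_smul, Real.norm_eq_abs, abs_of_pos ht] at h
    linarith
  have h01 := hanti Set.self_mem_Ici (Set.mem_Ici.2 zero_le_one) zero_le_one
  simp only [φ, one_smul, zero_smul, add_zero] at h01
  linarith

theorem apply_sub_div_smul_le (hJ : ∀ u, HasFDerivAt J (J' u) u)
    (hLip : ∀ u v d : H, |J' (u + v) d - J' u d| ≤ L * ‖v‖ * ‖d‖) (hL : L ≠ 0) (u : H)
    {d : H} (hd : d ≠ 0) :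
    J (u - (J' u d / (L * ‖d‖ ^ 2)) • d) ≤ J u - J' u d ^ 2 / (2 * L * ‖d‖ ^ 2) := by
  have hdn : ‖d‖ ≠ 0 := norm_ne_zero_iff.2 hd
  have h := apply_add_le_of_lipschitz_fderiv hJ hLip u (-((J' u d / (L * ‖d‖ ^ 2)) • d))
  rw [← sub_eq_add_neg, map_neg, map_smul, norm_neg, norm_smul, Real.norm_eq_abs, mul_pow,
    sq_abs, smul_eq_mul] at h
  refine h.trans (le_of_eq ?_)
  field_simp
  ring

theorem apply_sub_div_smul_add_le_of_angle (hJ : ∀ u, HasFDerivAt J (J' u) u)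
    (hLip : ∀ u v d : H, |J' (u + v) d - J' u d| ≤ L * ‖v‖ * ‖d‖) (hL : 0 < L) {ε : ℝ}
    (hε : 0 ≤ ε) (u : H) {d : H} (hd : d ≠ 0) (hangle : ε * ‖d‖ * ‖J' u‖ ≤ |J' u d|) :
    J (u - (J' u d / (L * ‖d‖ ^ 2)) • d) + ε ^ 2 / (2 * L) * ‖J' u‖ ^ 2 ≤ J u := by
  have hdpos : 0 < ‖d‖ := norm_pos_iff.2 hd
  have hangle_sq : (ε * ‖d‖ * ‖J' u‖) ^ 2 ≤ J' u d ^ 2 := by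
    rw [← sq_abs (J' u d)]
    exact pow_le_pow_left₀ (by positivity) hangle 2
  have hgain : ε ^ 2 / (2 * L) * ‖J' u‖ ^ 2 ≤ J' u d ^ 2 / (2 * L * ‖d‖ ^ 2) := by
    rw [le_div_iff₀ (by positivity)]
    calc ε ^ 2 / (2 * L) * ‖J' u‖ ^ 2 * (2 * L * ‖d‖ ^ 2) = (ε * ‖d‖ * ‖J' u‖) ^ 2 := by
          field_simp
      _ ≤ J' u d ^ 2 := hangle_sq
  linarith [apply_sub_div_smul_le hJ hLip hL.ne' u hd]

end Descent

theorem Real.sign_mul_div_smul_sign_smul {E : Type*} [AddCommGroup E] [Module ℝ E]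
    (g a : ℝ) (d : E) : (Real.sign g * g / a) • Real.sign g • d = (g / a) • d := by
  rcases lt_trichotomy g 0 with hg | rfl | hg
  · simp [Real.sign_of_neg hg, neg_div]
  · simp
  · simp [Real.sign_of_pos hg]

theorem summable_of_succ_add_le {f e : ℕ → ℝ} {C : ℝ} (he : ∀ m, 0 ≤ e m)
    (hC : ∀ m, C ≤ f m) (hstep : ∀ m, f (m + 1) + e m ≤ f m) : Summable e := by
  refine summable_of_sum_range_le he (c := f 0 - C) fun n => ?_
  calc ∑ i ∈ Finset.range n, e i ≤ ∑ i ∈ Finset.range n, (f i - f (i + 1)) :=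
        Finset.sum_le_sum fun i _ => by linarith [hstep i]
    _ = f 0 - f n := Finset.sum_range_sub' f n
    _ ≤ f 0 - C := by linarith [hC n]

theorem stmt2_general {H : Type*} [NormedAddCommGroup H] [InnerProductSpace ℝ H]
    (J : H → ℝ) (J' : H → H →L[ℝ] ℝ) (hJ : ∀ u, HasFDerivAt J (J' u) u)
    (L C : ℝ) (hL : 0 < L)
    (hLip : ∀ u v d : H, |J' (u + v) d - J' u d| ≤ L * ‖v‖ * ‖d‖)
    (hbd : ∀ u, C ≤ J u)
    (εθ : ℝ) (hεθ : 0 < εθ)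
    (u : ℕ → H) (hd : ∀ m, u (m + 1) - u m ≠ 0)
    (hmin : ∀ m,
      J (u (m + 1)) ≤
        J (u m -
          (Real.sign (J' (u m) (u (m + 1) - u m)) * J' (u m) (u (m + 1) - u m) /
              (L * ‖u (m + 1) - u m‖ ^ 2)) •
            Real.sign (J' (u m) (u (m + 1) - u m)) • (u (m + 1) - u m)))
    (hangle : ∀ m, εθ * ‖u (m + 1) - u m‖ * ‖J' (u m)‖ ≤ |J' (u m) (u (m + 1) - u m)|) :
    Tendsto (fun m => ‖J' (u m)‖) atTop (nhds 0) := by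
  set c := εθ ^ 2 / (2 * L)
  have hc : 0 < c := by positivity
  have hdecrease : ∀ m, J (u (m + 1)) + c * ‖J' (u m)‖ ^ 2 ≤ J (u m) := by
    intro m
    have hstep := hmin m
    rw [Real.sign_mul_div_smul_sign_smul] at hstep
    linarith [apply_sub_div_smul_add_le_of_angle hJ hLip hL hεθ.le (u m) (hd m) (hangle m)]
  have hsum := summable_of_succ_add_le (fun m => by positivity) (fun m => hbd (u m)) hdecrease
  have hlim : Tendsto (fun m => Real.sqrt (c * ‖J' (u m)‖ ^ 2 / c)) atTop (nhds 0) := by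
    simpa using (hsum.tendsto_atTop_zero.div_const c).sqrt
  refine hlim.congr fun m => ?_
  rw [mul_div_cancel_left₀ _ hc.ne', Real.sqrt_sq (norm_nonneg _)]

/-- Theorem 2.1: convergence of the gradient in the Adaptive Inversion algorithm. -/
theorem stmt2 {H : Type*} [NormedAddCommGroup H] [InnerProductSpace ℝ H] [CompleteSpace H]
    (J : H → ℝ) (J' : H → H →L[ℝ] ℝ) (hJ : ∀ u, HasFDerivAt J (J' u) u)
    (L C : ℝ) (hL : 0 < L)
    (hLip : ∀ u v d : H, |J' (u + v) d - J' u d| ≤ L * ‖v‖ * ‖d‖)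
    (hbd : ∀ u, C ≤ J u)
    (εθ : ℝ) (hεθ : 0 < εθ) (hεθ1 : εθ < 1)
    (u : ℕ → H) (hd : ∀ m, u (m + 1) - u m ≠ 0)
    (hmin : ∀ m,
      J (u (m + 1)) ≤
        J (u m -
          (Real.sign (J' (u m) (u (m + 1) - u m)) * J' (u m) (u (m + 1) - u m) /
              (L * ‖u (m + 1) - u m‖ ^ 2)) •
            Real.sign (J' (u m) (u (m + 1) - u m)) • (u (m + 1) - u m)))
    (hangle : ∀ m, εθ * ‖u (m + 1) - u m‖ * ‖J' (u m)‖ ≤ |J' (u m) (u (m + 1) - u m)|) :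
    Tendsto (fun m => ‖J' (u m)‖) atTop (nhds 0) :=
  stmt2_general J J' hJ L C hL hLip hbd εθ hεθ u hd hmin hangle
end

section
/- Let H be a real Hilbert space, g : H → ℝ a continuous linear functional, (φₖ)ₖ₌₁ᴺ an orthonormal family in H, and ε_θ > 0. Suppose |g(φₖ)| ≥ ε_θ ‖g‖ for all k = 1, …, N. Then the element d = ∑ₖ₌₁ᴺ g(φₖ) φₖ satisfies |g(d)| ≥ ε_θ ‖d‖ ‖g‖. -/
open Finset

/-- Lemma 4.1: the ℓ∞-criterion implies the angle condition. -/
theorem stmt3 {H : Type*} [NormedAddCommGroup H] [InnerProductSpace ℝ H] [CompleteSpace H]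
    (g : H →L[ℝ] ℝ) (N : ℕ) (φ : Fin N → H) (hφ : Orthonormal ℝ φ)
    (εθ : ℝ) (hεθ : 0 < εθ)
    (hcrit : ∀ k : Fin N, εθ * ‖g‖ ≤ |g (φ k)|) :
    εθ * ‖∑ k, g (φ k) • φ k‖ * ‖g‖ ≤ |g (∑ k, g (φ k) • φ k)| := by
  set d := ∑ k, g (φ k) • φ k with hd
  have hnorm : ‖d‖ ^ 2 = ∑ k, (g (φ k)) ^ 2 := by
    rw [← @real_inner_self_eq_norm_sq]
    simpa [sq] using hφ.inner_sum (fun k => g (φ k)) (fun k => g (φ k)) Finset.univ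
  have hgd : g d = ∑ k, (g (φ k)) ^ 2 := by
    rw [hd, map_sum]
    congr 1
    ext k
    simp [sq, mul_comm]
  have hgd' : g d = ‖d‖ ^ 2 := by rw [hgd, hnorm]
  rcases Nat.eq_zero_or_pos N with h0 | hN
  · subst h0
    simp [d]
  · have k0 : Fin N := ⟨0, hN⟩
    have hkey : εθ * ‖g‖ ≤ ‖d‖ := by
      have h1 : (εθ * ‖g‖) ^ 2 ≤ ‖d‖ ^ 2 := by
        rw [hnorm]
        calc (εθ * ‖g‖) ^ 2 ≤ |g (φ k0)| ^ 2 :=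
              pow_le_pow_left₀ (by positivity) (hcrit k0) 2
          _ = (g (φ k0)) ^ 2 := sq_abs _
          _ ≤ ∑ k, (g (φ k)) ^ 2 :=
              Finset.single_le_sum (f := fun k => (g (φ k)) ^ 2)
                (fun k _ => sq_nonneg _) (Finset.mem_univ k0)
      exact (pow_le_pow_iff_left₀ (by positivity) (norm_nonneg d) two_ne_zero).mp h1
    calc εθ * ‖d‖ * ‖g‖ = (εθ * ‖g‖) * ‖d‖ := by ring
      _ ≤ ‖d‖ * ‖d‖ := mul_le_mul_of_nonneg_right hkey (norm_nonneg d)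
      _ = ‖d‖ ^ 2 := by ring
      _ = g d := hgd'.symm
      _ ≤ |g d| := le_abs_self _
end

section
/- Let H₁, H₂ be Hilbert spaces, F : H₁ → H₂ continuous, u† ∈ H₁ with F(u†) = y†, and y^δ ∈ H₂ with ‖y† − y^δ‖ ≤ δ for some δ > 0. Let (Ψ⁽ᵐ⁾) be a sequence of closed subspaces of H₁ with orthogonal projections Π_m such that ‖(I − Π_m)u†‖ → 0 as m → ∞, and for each m let u⁽ᵐ⁾ ∈ Ψ⁽ᵐ⁾ minimize ‖F(·) − y^δ‖ over Ψ⁽ᵐ⁾. Then for every τ > 1 there exists M such that ‖F(u⁽ᴹ⁾) − y^δ‖ ≤ τδ. -/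
open Filter Topology

/-! The projections Π_m u† converge to u†, so by continuity their residuals ‖F(Π_m u†) − y^δ‖
tend to ‖y† − y^δ‖ ≤ δ < τδ. Since Π_m u† ∈ Ψ⁽ᵐ⁾, the minimizer u⁽ᵐ⁾ has residual no larger. -/

theorem eventually_residual_lt_of_tendsto_mem {ι X Y : Type*} [TopologicalSpace X]
    [SeminormedAddCommGroup Y] {l : Filter ι} {F : X → Y} {x : X} {y : Y} {c : ℝ}
    (hF : ContinuousAt F x) (hc : ‖F x - y‖ < c) {S : ι → Set X} {u v : ι → X}
    (hv : Tendsto v l (𝓝 x)) (hvS : ∀ i, v i ∈ S i)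
    (hmin : ∀ i, ∀ w ∈ S i, ‖F (u i) - y‖ ≤ ‖F w - y‖) :
    ∀ᶠ i in l, ‖F (u i) - y‖ < c := by
  have hres : Tendsto (fun i => ‖F (v i) - y‖) l (𝓝 ‖F x - y‖) :=
    ((hF.tendsto.comp hv).sub_const y).norm
  filter_upwards [hres.eventually (gt_mem_nhds hc)] with i hi
  exact (hmin i (v i) (hvS i)).trans_lt hi

theorem tendsto_orthogonalProjectionOnto_of_tendsto_norm_sub {ι H : Type*} [NormedAddCommGroup H]
    [InnerProductSpace ℝ H] {l : Filter ι} (K : ι → Submodule ℝ H)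
    [∀ i, (K i).HasOrthogonalProjection] {x : H}
    (h : Tendsto (fun i => ‖x - ((K i).orthogonalProjectionOnto x : H)‖) l (𝓝 0)) :
    Tendsto (fun i => ((K i).orthogonalProjectionOnto x : H)) l (𝓝 x) := by
  rw [tendsto_iff_norm_sub_tendsto_zero]
  simpa only [norm_sub_rev] using h

theorem stmt8_general {H₁ H₂ : Type*}
    [NormedAddCommGroup H₁] [InnerProductSpace ℝ H₁]
    [NormedAddCommGroup H₂] [InnerProductSpace ℝ H₂]
    (F : H₁ → H₂) (hF : Continuous F)
    (udag : H₁) (ydag yδ : H₂) (δ : ℝ) (hδ : 0 < δ)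
    (hsol : F udag = ydag) (hnoise : ‖ydag - yδ‖ ≤ δ)
    (Ψ : ℕ → Submodule ℝ H₁)
    [∀ m, CompleteSpace (Ψ m)]
    (hproj : Tendsto (fun m => ‖udag - (Submodule.orthogonalProjectionOnto (Ψ m) udag : H₁)‖) atTop (nhds 0))
    (u : ℕ → H₁)
    (hmin : ∀ m, ∀ v ∈ Ψ m, ‖F (u m) - yδ‖ ≤ ‖F v - yδ‖)
    (τ : ℝ) (hτ : 1 < τ) :
    ∃ M : ℕ, ‖F (u M) - yδ‖ ≤ τ * δ := by
  have hlt : ‖F udag - yδ‖ < τ * δ := by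
    rw [hsol]
    exact hnoise.trans_lt (lt_mul_of_one_lt_left hδ hτ)
  obtain ⟨M, hM⟩ := (eventually_residual_lt_of_tendsto_mem hF.continuousAt hlt
    (tendsto_orthogonalProjectionOnto_of_tendsto_norm_sub Ψ hproj)
    (fun m => ((Ψ m).orthogonalProjectionOnto udag).2) hmin).exists
  exact ⟨M, hM.le⟩

/-- Lemma 2.2: the discrepancy-principle stopping index is well defined. -/
theorem stmt8 {H₁ H₂ : Type*}
    [NormedAddCommGroup H₁] [InnerProductSpace ℝ H₁] [CompleteSpace H₁]
    [NormedAddCommGroup H₂] [InnerProductSpace ℝ H₂] [CompleteSpace H₂]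
    (F : H₁ → H₂) (hF : Continuous F)
    (udag : H₁) (ydag yδ : H₂) (δ : ℝ) (hδ : 0 < δ)
    (hsol : F udag = ydag) (hnoise : ‖ydag - yδ‖ ≤ δ)
    (Ψ : ℕ → Submodule ℝ H₁) (hcl : ∀ m, IsClosed (Ψ m : Set H₁))
    [∀ m, CompleteSpace (Ψ m)]
    (hproj : Tendsto (fun m => ‖udag - (Submodule.orthogonalProjectionOnto (Ψ m) udag : H₁)‖) atTop (nhds 0))
    (u : ℕ → H₁) (hu : ∀ m, u m ∈ Ψ m)
    (hmin : ∀ m, ∀ v ∈ Ψ m, ‖F (u m) - yδ‖ ≤ ‖F v - yδ‖)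
    (τ : ℝ) (hτ : 1 < τ) :
    ∃ M : ℕ, ‖F (u M) - yδ‖ ≤ τ * δ :=
  stmt8_general F hF udag ydag yδ δ hδ hsol hnoise Ψ hproj u hmin τ hτ
end

section
/- Let H be a Hilbert space, (φₖ)ₖ₌₁ᴺ an orthonormal family, g a continuous linear functional with coefficients σₖ = g(φₖ) sorted so |σ₁| ≥ |σ₂| ≥ … ≥ |σ_N|. Let ε_θ ∈ (0,1), let N_∞ be the largest index such that |σₖ| ≥ ε_θ‖g‖ for all k ≤ N_∞ (or 0 if none), and N₂ the smallest index with √(∑ₖ₌₁^{N₂}σₖ²) ≥ ε_θ‖g‖ (assume it exists). Then N₂ ≤ max(N_∞, N₂), and with N_θ = max(N_∞, N₂), the element d = ∑ₖ₌₁^{N_θ} σₖφₖ satisfies |g(d)| ≥ ε_θ‖d‖‖g‖. -/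
open Finset

/-- Combining Lemmas 4.1 and 4.2: with N_θ = max(N_∞, N₂) basis functions, the
element d = ∑_{k<N_θ} σ_k φ_k satisfies the angle condition (coefficients 0-indexed,
sorted in decreasing absolute value). -/
theorem stmt15 {H : Type*} [NormedAddCommGroup H] [InnerProductSpace ℝ H] [CompleteSpace H]
    (N : ℕ) (φ : Fin N → H) (hφ : Orthonormal ℝ φ) (g : H →L[ℝ] ℝ)
    (hsorted : ∀ i j : Fin N, i ≤ j → |g (φ j)| ≤ |g (φ i)|)
    (εθ : ℝ) (hεθ0 : 0 < εθ) (hεθ1 : εθ < 1)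
    (Ninf N₂ : ℕ) (hNinfN : Ninf ≤ N) (hN₂N : N₂ ≤ N)
    (hNinf : ∀ k : Fin N, (k : ℕ) < Ninf → εθ * ‖g‖ ≤ |g (φ k)|)
    (hNinfmax : ∀ M : ℕ, M ≤ N → (∀ k : Fin N, (k : ℕ) < M → εθ * ‖g‖ ≤ |g (φ k)|) → M ≤ Ninf)
    (hN₂ : εθ * ‖g‖ ≤
      Real.sqrt (∑ k ∈ Finset.univ.filter (fun k : Fin N => (k : ℕ) < N₂), (g (φ k)) ^ 2))
    (hN₂min : ∀ M : ℕ, M < N₂ → ¬ (εθ * ‖g‖ ≤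
      Real.sqrt (∑ k ∈ Finset.univ.filter (fun k : Fin N => (k : ℕ) < M), (g (φ k)) ^ 2))) :
    N₂ ≤ max Ninf N₂ ∧
    εθ * ‖∑ k ∈ Finset.univ.filter (fun k : Fin N => (k : ℕ) < max Ninf N₂), g (φ k) • φ k‖ * ‖g‖ ≤
      |g (∑ k ∈ Finset.univ.filter (fun k : Fin N => (k : ℕ) < max Ninf N₂), g (φ k) • φ k)| := by
  refine ⟨le_max_right _ _, ?_⟩
  set s := Finset.univ.filter (fun k : Fin N => (k : ℕ) < max Ninf N₂) with hs
  set S := ∑ k ∈ s, (g (φ k)) ^ 2 with hS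
  have hSnn : 0 ≤ S := Finset.sum_nonneg fun k _ => sq_nonneg _
  have hgd : g (∑ k ∈ s, g (φ k) • φ k) = S := by
    rw [map_sum]
    simp [hS, pow_two]
  have hsub : (Finset.univ.filter (fun k : Fin N => (k : ℕ) < N₂)) ⊆ s := by
    intro k hk
    simp only [hs, Finset.mem_filter, Finset.mem_univ, true_and] at hk ⊢
    exact hk.trans_le (le_max_right _ _)
  have hle : εθ * ‖g‖ ≤ Real.sqrt S := by
    refine hN₂.trans (Real.sqrt_le_sqrt ?_)
    exact Finset.sum_le_sum_of_subset_of_nonneg hsub (fun k _ _ => sq_nonneg _)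
  have hnorm : ‖∑ k ∈ s, g (φ k) • φ k‖ = Real.sqrt S := by
    have h2 : ‖∑ k ∈ s, g (φ k) • φ k‖ ^ 2 = S := by
      rw [← real_inner_self_eq_norm_sq, hφ.inner_sum]
      simp [hS, pow_two]
    rw [← h2, Real.sqrt_sq (norm_nonneg _)]
  rw [hgd, hnorm, abs_of_nonneg hSnn]
  calc εθ * Real.sqrt S * ‖g‖ = (εθ * ‖g‖) * Real.sqrt S := by ring
    _ ≤ Real.sqrt S * Real.sqrt S := by
        exact mul_le_mul_of_nonneg_right hle (Real.sqrt_nonneg _)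
    _ = S := Real.mul_self_sqrt hSnn
end
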